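/- arXiv:1808.03066 — 7 statements merged into one kernel-verified Lean document; each statement's English description precedes it below -/
import Mathlib

section
/- Let M be a cancellative monoid with homogeneous relations in which every pair of elements has a least common multiple, with finite atom set 𝒜, and let α_k denote the number of elements of length k (with α_k = 0 for k < 0 and α_0 = 1). Then for every k > 0, the alternating sum over all subsets S ⊆ 𝒜 of (-1)^{|S|} α_{k - ‖∨S‖} equals 0, where ∨S is the least common multiple of the elements of S (with ∨∅ = 1) and ‖·‖ is the length. -/
/-- Inclusion-exclusion (Deligne/Bronfman/Saito) for a homogeneous Garside monoid of
finite type: `M` is a cancellative monoid, `ℓ` is the (homogeneous) length function,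
`A` is the finite set of atoms (every nontrivial element is left-divisible by an atom),
`lub S` is the least common multiple of `S ⊆ A` with respect to left divisibility,
and `α k` is the number of elements of length `k` (zero for `k < 0`). Then for every
`k > 0`, `∑_{S ⊆ A} (-1)^{|S|} α_{k - ‖∨S‖} = 0`. -/
theorem garside_inclusion_exclusion
    (M : Type*) [CancelMonoid M]
    (ℓ : M → ℕ)
    (hadd : ∀ a b : M, ℓ (a * b) = ℓ a + ℓ b)
    (hone : ∀ a : M, ℓ a = 0 ↔ a = 1)
    (A : Finset M)
    (hatom : ∀ b : M, b ≠ 1 → ∃ a ∈ A, a ∣ b)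
    (lub : Finset M → M)
    (hlub : ∀ S : Finset M, S ⊆ A → ∀ b : M, (∀ a ∈ S, a ∣ b) ↔ lub S ∣ b)
    (hfin : ∀ k : ℕ, {b : M | ℓ b = k}.Finite)
    (α : ℤ → ℤ)
    (hα : ∀ k : ℤ, α k = if k < 0 then 0 else (Nat.card {b : M // ℓ b = k.toNat} : ℤ)) :
    ∀ k : ℤ, 0 < k →
      ∑ S ∈ A.powerset, (-1 : ℤ) ^ S.card * α (k - (ℓ (lub S) : ℤ)) = 0 := by
  classical
  intro k hk
  set n := k.toNat with hn
  have hkn : (n : ℤ) = k := Int.toNat_of_nonneg hk.le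
  have hn0 : 0 < n := by omega
  set B : Finset M := (hfin n).toFinset with hB
  have hBmem : ∀ b : M, b ∈ B ↔ ℓ b = n := by
    intro b; simp [hB, Set.Finite.mem_toFinset]
  have hcard : ∀ m : ℕ, (Nat.card {b : M // ℓ b = m} : ℤ) = ((hfin m).toFinset.card : ℤ) := by
    intro m
    have h1 : Nat.card {b : M // ℓ b = m} = ({b : M | ℓ b = m}).ncard :=
      Nat.card_coe_set_eq _
    rw [h1, Set.ncard_eq_toFinset_card _ (hfin m)]
  -- Step 1 : α (k - ℓ (lub S)) is the number of b of length n divisible by lub S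
  have step1 : ∀ S : Finset M, S ⊆ A →
      α (k - (ℓ (lub S) : ℤ)) = ((B.filter fun b => lub S ∣ b).card : ℤ) := by
    intro S hS
    by_cases hle : ℓ (lub S) ≤ n
    · have hneg : ¬ (k - (ℓ (lub S) : ℤ) < 0) := by omega
      rw [hα, if_neg hneg]
      have htn : (k - (ℓ (lub S) : ℤ)).toNat = n - ℓ (lub S) := by omega
      rw [htn, hcard]
      congr 1
      refine Finset.card_bij (fun c _ => lub S * c) ?_ ?_ ?_
      · intro c hc
        have hc' : ℓ c = n - ℓ (lub S) := by
          simpa [Set.Finite.mem_toFinset] using hc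
        simp only [Finset.mem_filter, hBmem]
        exact ⟨by rw [hadd]; omega, Dvd.intro c rfl⟩
      · intro c1 h1 c2 h2 h
        exact mul_left_cancel h
      · intro b hb
        simp only [Finset.mem_filter, hBmem] at hb
        obtain ⟨hbn, c, hc⟩ := hb
        subst hc
        have hlc : ℓ c = n - ℓ (lub S) := by rw [hadd] at hbn; omega
        exact ⟨c, by simpa [Set.Finite.mem_toFinset] using hlc, rfl⟩
    · have hneg : k - (ℓ (lub S) : ℤ) < 0 := by omega
      rw [hα, if_pos hneg]
      have : (B.filter fun b => lub S ∣ b) = ∅ := by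
        refine Finset.filter_eq_empty_iff.2 ?_
        rintro b hb ⟨c, rfl⟩
        rw [hBmem, hadd] at hb
        omega
      rw [this]; simp
  -- Step 2 : swap the sums
  calc ∑ S ∈ A.powerset, (-1 : ℤ) ^ S.card * α (k - (ℓ (lub S) : ℤ))
      = ∑ S ∈ A.powerset, ∑ b ∈ B, (if lub S ∣ b then (-1 : ℤ) ^ S.card else 0) := by
        refine Finset.sum_congr rfl fun S hS => ?_
        rw [step1 S (Finset.mem_powerset.1 hS), ← Finset.sum_filter,
          Finset.sum_const, nsmul_eq_mul, mul_comm]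
    _ = ∑ b ∈ B, ∑ S ∈ A.powerset, (if lub S ∣ b then (-1 : ℤ) ^ S.card else 0) :=
        Finset.sum_comm
    _ = 0 := by
        refine Finset.sum_eq_zero fun b hb => ?_
        rw [hBmem] at hb
        have hbne : b ≠ 1 := fun h => by
          rw [h, (hone 1).2 rfl] at hb; omega
        set D : Finset M := A.filter (· ∣ b) with hD
        have hDA : D ⊆ A := Finset.filter_subset _ _
        have hiff : ∀ S ∈ A.powerset, (lub S ∣ b ↔ S ⊆ D) := by
          intro S hS
          rw [Finset.mem_powerset] at hS
          rw [← hlub S hS b]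
          constructor
          · intro h a ha
            exact Finset.mem_filter.2 ⟨hS ha, h a ha⟩
          · intro h a ha
            exact (Finset.mem_filter.1 (h ha)).2
        have : ∑ S ∈ A.powerset, (if lub S ∣ b then (-1 : ℤ) ^ S.card else 0)
            = ∑ S ∈ D.powerset, (-1 : ℤ) ^ S.card := by
          rw [← Finset.sum_filter]
          congr 1
          ext S
          simp only [Finset.mem_filter, Finset.mem_powerset]
          constructor
          · rintro ⟨hS, hdvd⟩
            exact (hiff S (Finset.mem_powerset.2 hS)).1 hdvd
          · intro hS
            exact ⟨hS.trans hDA, (hiff S (Finset.mem_powerset.2 (hS.trans hDA))).2 hS⟩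
        rw [this]
        obtain ⟨a, haA, hab⟩ := hatom b hbne
        exact Finset.sum_powerset_neg_one_pow_card_of_nonempty
          ⟨a, Finset.mem_filter.2 ⟨haA, hab⟩⟩
end

section
/- The determinant of the (n+1)×(n+1) matrix whose (i,j) entry is t^{C(j-i+1,2)} when j-i+1 ≥ 0 and 0 otherwise is a polynomial in t of degree exactly C(n+1,2), whose unique term of highest degree is (-1)^n t^{C(n+1,2)}. -/
open Polynomial

/-- The `(n+1) × (n+1)` matrix `𝓜ᴬ_n` over `ℤ[t]` whose `(i,j)` entry (1-based) is
`t^{C(j-i+1,2)}` when `j - i + 1 ≥ 0` and `0` otherwise. -/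
noncomputable def MatA (n : ℕ) : Matrix (Fin (n + 1)) (Fin (n + 1)) (Polynomial ℤ) :=
  Matrix.of fun i j =>
    if (i : ℕ) ≤ (j : ℕ) + 1 then (X : Polynomial ℤ) ^ (((j : ℕ) + 1 - (i : ℕ)).choose 2) else 0

/-- Generalization of `MatA` with the powers in the first row shifted by `m`. -/
noncomputable def MatB (n m : ℕ) : Matrix (Fin (n + 1)) (Fin (n + 1)) (Polynomial ℤ) :=
  Matrix.of fun i j =>
    if (i : ℕ) ≤ (j : ℕ) + 1 then
      (X : Polynomial ℤ) ^ (if (i : ℕ) = 0 then ((j : ℕ) + 1 + m).choose 2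
        else (((j : ℕ) + 1 - (i : ℕ)).choose 2))
    else 0

lemma matB_zero (n : ℕ) : MatB n 0 = MatA n := by
  ext i j : 2
  simp only [MatB, MatA, Matrix.of_apply]
  rcases eq_or_ne (i : ℕ) 0 with h | h
  · simp [h]
  · simp [h]

lemma choose_two_add (a b : ℕ) : (a + b).choose 2 = a.choose 2 + b.choose 2 + a * b := by
  induction a with
  | zero => simp
  | succ a ih =>
    have h1 : a + 1 + b = (a + b) + 1 := by omega
    rw [h1, Nat.choose_succ_succ, Nat.choose_one_right, ih,
      Nat.choose_succ_succ, Nat.choose_one_right]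
    ring

lemma sub0 (n m : ℕ) :
    (MatB (n + 1) m).submatrix (Fin.succAbove 0) Fin.succ = MatB n 0 := by
  rw [← Matrix.ext_iff]
  intro i j
  simp only [Matrix.submatrix_apply, Fin.succAbove_zero, MatB, Matrix.of_apply, Fin.val_succ]
  by_cases hij : (i : ℕ) ≤ (j : ℕ) + 1
  · rw [if_pos (by omega), if_pos hij, if_neg (by omega)]
    rcases eq_or_ne (i : ℕ) 0 with h | h
    · rw [if_pos h, h]
      have e : (j : ℕ) + 1 + 1 - (0 + 1) = (j : ℕ) + 1 + 0 := by omega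
      rw [e]
    · rw [if_neg h]
      have e : (j : ℕ) + 1 + 1 - ((i : ℕ) + 1) = (j : ℕ) + 1 - (i : ℕ) := by omega
      rw [e]
  · rw [if_neg (by omega), if_neg hij]

lemma sub1 (n m : ℕ) :
    (MatB (n + 1) m).submatrix (Fin.succ (0 : Fin (n + 1))).succAbove Fin.succ
      = MatB n (m + 1) := by
  rw [← Matrix.ext_iff]
  intro i j
  have hval : (((Fin.succ (0 : Fin (n + 1))).succAbove i : Fin (n + 2)) : ℕ)
      = if (i : ℕ) < 1 then (i : ℕ) else (i : ℕ) + 1 := by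
    rw [Fin.succAbove]
    split_ifs with h h' h'
    · rfl
    · exfalso
      apply h'
      have := Fin.lt_iff_val_lt_val.mp h
      simpa using this
    · exfalso
      apply h
      rw [Fin.lt_iff_val_lt_val]
      simpa using h'
    · rfl
  simp only [Matrix.submatrix_apply, MatB, Matrix.of_apply, Fin.val_succ]
  rcases eq_or_ne (i : ℕ) 0 with h | h
  · have hval0 : (((Fin.succ (0 : Fin (n + 1))).succAbove i : Fin (n + 2)) : ℕ) = 0 := by
      rw [hval, if_pos (by omega)]
      exact h
    rw [hval0, if_pos (by omega), if_pos rfl, h, if_pos (by omega : (0:ℕ) ≤ (j:ℕ) + 1),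
      if_pos rfl]
    have e : (j : ℕ) + 1 + 1 + m = (j : ℕ) + 1 + (m + 1) := by omega
    rw [e]
  · have hval1 : (((Fin.succ (0 : Fin (n + 1))).succAbove i : Fin (n + 2)) : ℕ)
        = (i : ℕ) + 1 := by
      rw [hval, if_neg (by omega)]
    rw [hval1]
    by_cases hij : (i : ℕ) ≤ (j : ℕ) + 1
    · rw [if_pos (by omega), if_pos hij, if_neg (by omega), if_neg h]
      have e : (j : ℕ) + 1 + 1 - ((i : ℕ) + 1) = (j : ℕ) + 1 - (i : ℕ) := by omega
      rw [e]
    · rw [if_neg (by omega), if_neg hij]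

lemma matB_entry_zero (n m : ℕ) (i : Fin n) :
    MatB (n + 1) m i.succ.succ 0 = 0 := by
  have : ¬ ((i.succ.succ : Fin (n + 2)) : ℕ) ≤ ((0 : Fin (n + 2)) : ℕ) + 1 := by
    simp [Fin.val_succ]
  simp [MatB, this]

lemma detB_rec (n m : ℕ) :
    (MatB (n + 1) m).det
      = X ^ ((m + 1).choose 2) * (MatB n 0).det - (MatB n (m + 1)).det := by
  rw [Matrix.det_succ_column_zero, Fin.sum_univ_succ, Fin.sum_univ_succ]
  have hz : ∀ i : Fin n, MatB (n + 1) m i.succ.succ 0 = 0 := matB_entry_zero n m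
  have h00 : MatB (n + 1) m 0 0 = X ^ ((m + 1).choose 2) := by
    have e : (0:ℕ) + 1 + m = m + 1 := by omega
    simp [MatB, e]
  have h10 : MatB (n + 1) m (Fin.succ 0) 0 = 1 := by
    simp [MatB]
  rw [h00, h10, sub0, sub1]
  simp [hz]
  ring

lemma detB_deg (n : ℕ) : ∀ m : ℕ,
    (MatB n m).det.degree = (((n + m + 1).choose 2 : ℕ) : WithBot ℕ) ∧
      (MatB n m).det.coeff ((n + m + 1).choose 2) = (-1 : ℤ) ^ n := by
  induction n with
  | zero =>
    intro m
    have h : (MatB 0 m).det = X ^ ((m + 1).choose 2) := by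
      have e : (0:ℕ) + 1 + m = m + 1 := by omega
      rw [Matrix.det_fin_one]
      simp [MatB, e]
    have hm : 0 + m + 1 = m + 1 := by omega
    rw [h, hm]
    constructor
    · rw [degree_X_pow]
    · rw [coeff_X_pow]
      simp
  | succ n ih =>
    intro m
    have key := detB_rec n m
    have ih0 := ih 0
    simp only [Nat.add_zero] at ih0
    have ih1 := ih (m + 1)
    set d := (n + 1 + m + 1).choose 2 with hd
    have hd1 : n + (m + 1) + 1 = n + 1 + m + 1 := by omega
    rw [hd1] at ih1
    have hdeg1 : (X ^ ((m + 1).choose 2) * (MatB n 0).det : Polynomial ℤ).degree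
        = (((m + 1).choose 2 + (n + 1).choose 2 : ℕ) : WithBot ℕ) := by
      rw [degree_mul, degree_X_pow, ih0.1]
      push_cast
      rfl
    have hlt : ((m + 1).choose 2 + (n + 1).choose 2 : ℕ) < d := by
      have hp : 0 < (m + 1) * (n + 1) := by positivity
      have hsum := choose_two_add (m + 1) (n + 1)
      have he : n + 1 + m + 1 = (m + 1) + (n + 1) := by omega
      rw [hd, he, hsum]
      omega
    have hdeglt : (X ^ ((m + 1).choose 2) * (MatB n 0).det : Polynomial ℤ).degree
        < (MatB n (m + 1)).det.degree := by
      rw [hdeg1, ih1.1]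
      exact_mod_cast hlt
    constructor
    · rw [key, degree_sub_eq_right_of_degree_lt hdeglt, ih1.1]
    · rw [key, coeff_sub]
      have hzero : (X ^ ((m + 1).choose 2) * (MatB n 0).det : Polynomial ℤ).coeff d = 0 := by
        apply coeff_eq_zero_of_degree_lt
        rw [hdeg1]
        exact_mod_cast hlt
      rw [hzero, ih1.2]
      ring

/-- `det 𝓜ᴬ_n` has degree exactly `C(n+1,2)`, and its unique term of highest degree is
`(-1)^n t^{C(n+1,2)}`. -/
theorem det_MatA_degree_and_leading_term (n : ℕ) :
    (MatA n).det.degree = (((n + 1).choose 2 : ℕ) : WithBot ℕ) ∧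
      (MatA n).det.coeff ((n + 1).choose 2) = (-1 : ℤ) ^ n := by
  have h := detB_deg n 0
  rw [matB_zero] at h
  simpa using h
end

section
/- Define G_n(t) = det 𝓜ᴰ_n for n ≥ 2 and G_1(t) = 1. Then for n ≥ 2: G_n(t) = Σ_{i=1}^{n-1} (-1)^{i-1} t^{C(i,2)} G_{n-i}(t) + (-1)^{n-1} (2t^{C(n,2)} - t^{n(n-1)}). -/
/-!
Expand `det 𝓜ᴰ_n` along its first row. The entries of `𝓜ᴰ` depend only on the offsets
`j - i` and `n - i`, so deleting the first row and column `j` leaves a block triangular matrix: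
its first `j` columns are unit vectors, which peel off by expansion along the first column,
and the remaining block is `𝓜ᴰ_{n-1-j}` (the empty matrix, of determinant `1`, for the last
column).
-/

open Polynomial

/-- The `n × n` matrix `𝓜ᴰ_n` over `ℤ[t]`: its `(i, n)` entry (1-based) is
`2t^{C(n-i+1,2)} - t^{(n-i+1)(n-i)}`, and for `j < n` its `(i,j)` entry is
`t^{C(j-i+1,2)}` when `j - i + 1 ≥ 0` and `0` otherwise. -/
noncomputable def MatD (n : ℕ) : Matrix (Fin n) (Fin n) (Polynomial ℤ) :=
  Matrix.of fun i j =>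
    if (j : ℕ) = n - 1 then
      2 * (X : Polynomial ℤ) ^ ((n - (i : ℕ)).choose 2) -
        (X : Polynomial ℤ) ^ ((n - (i : ℕ)) * (n - (i : ℕ) - 1))
    else if (i : ℕ) ≤ (j : ℕ) + 1 then (X : Polynomial ℤ) ^ (((j : ℕ) + 1 - (i : ℕ)).choose 2)
    else 0

/-- `G_m = det 𝓜ᴰ_m` for `m ≥ 2`, and `G_1 = 1`. -/
noncomputable def polyG (m : ℤ) : Polynomial ℤ :=
  if 2 ≤ m then (MatD m.toNat).det else 1

theorem Matrix.det_eq_det_submatrix_succ_succ_of_col_zero {R : Type*} [CommRing R] {n : ℕ}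
    (A : Matrix (Fin (n + 1)) (Fin (n + 1)) R) (h₀ : A 0 0 = 1) (h : ∀ i, A (Fin.succ i) 0 = 0) :
    A.det = (A.submatrix Fin.succ Fin.succ).det := by
  simp [Matrix.det_succ_column_zero, Fin.sum_univ_succ, h₀, h]

theorem MatD_succ_apply_succ_succ (n : ℕ) (i j : Fin n) :
    MatD (n + 1) i.succ j.succ = MatD n i j := by
  have hlast : (j : ℕ) + 1 = n ↔ (j : ℕ) = n - 1 := by omega
  simp only [MatD, Matrix.of_apply, Fin.val_succ, Nat.add_sub_add_right, add_tsub_cancel_right,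
    add_le_add_iff_right, hlast]

theorem MatD_apply_zero_castSucc {n : ℕ} (j : Fin n) :
    MatD (n + 1) 0 j.castSucc = X ^ ((j + 1 : ℕ).choose 2) := by
  simp [MatD, j.isLt.ne]

theorem MatD_apply_zero_last (n : ℕ) :
    MatD (n + 1) 0 (Fin.last n) = 2 * X ^ ((n + 1).choose 2) - X ^ ((n + 1) * n) := by
  simp [MatD]

theorem MatD_apply_one_zero (n : ℕ) : MatD (n + 2) 1 0 = 1 := by
  simp [MatD]

theorem MatD_apply_succ_succ_zero {n : ℕ} (i : Fin n) : MatD (n + 2) i.succ.succ 0 = 0 := by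
  simp [MatD]

theorem det_MatD_one : (MatD 1).det = 1 := by
  simp [MatD, sub_eq_iff_eq_add, one_add_one_eq_two]

theorem MatD_submatrix_succ_succ (n : ℕ) : (MatD (n + 1)).submatrix Fin.succ Fin.succ = MatD n :=
  Matrix.ext fun i j => MatD_succ_apply_succ_succ n i j

theorem det_MatD_submatrix_succ_succAbove (n : ℕ) (j : Fin (n + 1)) :
    ((MatD (n + 1)).submatrix Fin.succ j.succAbove).det = (MatD (n - j)).det := by
  induction n with
  | zero => rw [Fin.fin_one_eq_zero j, Fin.succAbove_zero, MatD_submatrix_succ_succ]; rfl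
  | succ n ih =>
    cases j using Fin.cases with
    | zero => rw [Fin.succAbove_zero, MatD_submatrix_succ_succ]; rfl
    | succ j =>
      have hminor : ((MatD (n + 2)).submatrix Fin.succ j.succ.succAbove).submatrix Fin.succ Fin.succ
          = (MatD (n + 1)).submatrix Fin.succ j.succAbove := by
        ext r c
        simp only [Matrix.submatrix_apply, Fin.succ_succAbove_succ, MatD_succ_apply_succ_succ]
      rw [Matrix.det_eq_det_submatrix_succ_succ_of_col_zero _ ?_ ?_, hminor, ih, Fin.val_succ,
        Nat.add_sub_add_right]
      · simpa [Fin.succ_succAbove_zero] using MatD_apply_one_zero n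
      · intro i
        simpa [Fin.succ_succAbove_zero] using MatD_apply_succ_succ_zero i

theorem polyG_natCast {m : ℕ} (hm : 1 ≤ m) : polyG m = (MatD m).det := by
  obtain rfl | hm := hm.eq_or_lt
  · rw [det_MatD_one]
    simp [polyG]
  · simp [polyG, show (2 : ℤ) ≤ m by omega]

/-- `G_n(t) = ∑_{i=1}^{n-1} (-1)^{i-1} t^{C(i,2)} G_{n-i}(t)
      + (-1)^{n-1} (2t^{C(n,2)} - t^{n(n-1)})` for `n ≥ 2`. -/
theorem polyG_recurrence :
    ∀ n : ℕ, 2 ≤ n → polyG n =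
      (∑ i ∈ Finset.range (n - 1),
          (-1 : Polynomial ℤ) ^ i * ((X : Polynomial ℤ) ^ ((i + 1).choose 2) * polyG ((n : ℤ) - (i + 1)))) +
        (-1 : Polynomial ℤ) ^ (n - 1) *
          (2 * (X : Polynomial ℤ) ^ (n.choose 2) - (X : Polynomial ℤ) ^ (n * (n - 1))) := by
  intro n hn
  obtain ⟨m, rfl⟩ : ∃ m, n = m + 1 := ⟨n - 1, by omega⟩
  rw [polyG_natCast (by omega), Matrix.det_succ_row_zero, Fin.sum_univ_castSucc,
    Nat.add_sub_cancel, ← Fin.sum_univ_eq_sum_range]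
  simp only [det_MatD_submatrix_succ_succAbove, MatD_apply_zero_castSucc, MatD_apply_zero_last,
    Fin.val_last, Fin.val_castSucc]
  rw [Matrix.det_eq_one_of_card_eq_zero (by simp), mul_one]
  congr 1
  refine Finset.sum_congr rfl fun j _ => ?_
  have hj : ((m + 1 : ℕ) : ℤ) - ((j : ℕ) + 1) = ((m - j : ℕ) : ℤ) := by omega
  rw [hj, polyG_natCast (by omega), mul_assoc]
end

section
/- Let R be a commutative ring and let f(x,y) = Σ_{k≥0} y^{C(k,2)} x^k ∈ R[[x,y]] be the partial theta function. There exists a unique formal power series x_0(y) ∈ R[[y]] with constant term -1 such that f(x_0(y), y) = 0, and its first coefficients satisfy -x_0(y) = 1 + y + 2y^2 + 4y^3 + 9y^4 + O(y^5) when R = ℤ. -/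
open PowerSeries

/-!
Write `x = ∑ xₘ yᵐ`. The coefficient of `yᵐ` in `f(x, y)` is `xₘ` plus an expression in
`x₀, …, xₘ₋₁` only: the term `k = 1` contributes `xₘ`, the term `k = 0` contributes only to
`m = 0`, and every term with `k ≥ 2` carries the factor `y^C(k,2)` with `C(k,2) ≥ 1`. Hence
`f(x, y) = 0` is a triangular system `xₘ = Fₘ(x₀, …, xₘ₋₁)`, which has exactly one solution,
built by recursion; its equation at `m = 0` forces `x₀ = -1`. Over `ℤ` the first coefficients
are then read off from the first five equations.
-/

namespace PowerSeries

variable {R : Type*} [CommRing R]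

theorem trunc_pow_eq_of_trunc_eq {n : ℕ} {f g : R⟦X⟧} (h : trunc n f = trunc n g) (k : ℕ) :
    trunc n (f ^ k) = trunc n (g ^ k) := by
  rw [← trunc_trunc_pow, h, trunc_trunc_pow]

theorem coeff_X_pow_mul_eq_of_trunc_eq {m c : ℕ} (hc : 0 < c) {f g : R⟦X⟧}
    (h : trunc m f = trunc m g) : coeff m (X ^ c * f) = coeff m (X ^ c * g) := by
  rw [coeff_X_pow_mul', coeff_X_pow_mul']
  split_ifs
  · have hlt : m - c < m := by omega
    simpa [coeff_trunc, hlt] using congrArg (Polynomial.coeff · (m - c)) h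
  · rfl

section Triangular

variable {F : ℕ → R⟦X⟧ → R}

theorem trunc_eq_of_coeff_eq_apply (hF : ∀ n f g, trunc n f = trunc n g → F n f = F n g)
    {N : ℕ} {f g : R⟦X⟧} (hf : ∀ n < N, coeff n f = F n f)
    (hg : ∀ n < N, coeff n g = F n g) : trunc N f = trunc N g := by
  induction N with
  | zero => rfl
  | succ N ih =>
    have htrunc := ih (fun n hn => hf n (by omega)) (fun n hn => hg n (by omega))
    rw [trunc_succ, trunc_succ, htrunc, hf N N.lt_succ_self, hg N N.lt_succ_self, hF N f g htrunc]

noncomputable def triangularSolution (F : ℕ → R⟦X⟧ → R) (n : ℕ) : R :=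
  F n (mk fun i => if i < n then triangularSolution F i else 0)
termination_by n
decreasing_by omega

theorem eq_of_forall_coeff_eq_apply (hF : ∀ n f g, trunc n f = trunc n g → F n f = F n g)
    {f g : R⟦X⟧} (hf : ∀ n, coeff n f = F n f) (hg : ∀ n, coeff n g = F n g) : f = g := by
  ext n
  have htrunc := trunc_eq_of_coeff_eq_apply hF (N := n + 1) (fun i _ => hf i) (fun i _ => hg i)
  simpa [coeff_trunc] using congrArg (Polynomial.coeff · n) htrunc

theorem coeff_mk_triangularSolution (hF : ∀ n f g, trunc n f = trunc n g → F n f = F n g)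
    (n : ℕ) : coeff n (mk (triangularSolution F)) = F n (mk (triangularSolution F)) := by
  have htrunc : trunc n (mk fun i => if i < n then triangularSolution F i else 0) =
      trunc n (mk (triangularSolution F)) := by
    ext i
    simp only [coeff_trunc, coeff_mk]
    split_ifs <;> rfl
  rw [coeff_mk, triangularSolution, hF n _ _ htrunc]

theorem existsUnique_coeff_eq_apply (hF : ∀ n f g, trunc n f = trunc n g → F n f = F n g) :
    ∃! f : R⟦X⟧, ∀ n, coeff n f = F n f :=
  ⟨_, coeff_mk_triangularSolution hF, fun _ hg =>
    eq_of_forall_coeff_eq_apply hF hg (coeff_mk_triangularSolution hF)⟩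

end Triangular

end PowerSeries

section PartialTheta

variable {R : Type*} [CommRing R]

noncomputable def partialThetaCoeff (m : ℕ) (x : R⟦X⟧) : R :=
  ∑ k ∈ Finset.range (m + 2), coeff m (X ^ k.choose 2 * x ^ k)

noncomputable def partialThetaCoeffRest (m : ℕ) (x : R⟦X⟧) : R :=
  ∑ k ∈ (Finset.range (m + 2)).erase 1, coeff m (X ^ k.choose 2 * x ^ k)

theorem partialThetaCoeff_eq_coeff_add_rest (m : ℕ) (x : R⟦X⟧) :
    partialThetaCoeff m x = coeff m x + partialThetaCoeffRest m x := by
  rw [partialThetaCoeff, partialThetaCoeffRest,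
    ← Finset.add_sum_erase _ _ (show 1 ∈ Finset.range (m + 2) by simp)]
  simp

theorem partialThetaCoeffRest_zero (x : R⟦X⟧) : partialThetaCoeffRest 0 x = 1 := by
  simp [partialThetaCoeffRest, show (Finset.range 2).erase 1 = {0} by decide]

theorem partialThetaCoeffRest_congr {m : ℕ} {x y : R⟦X⟧} (h : trunc m x = trunc m y) :
    partialThetaCoeffRest m x = partialThetaCoeffRest m y := by
  refine Finset.sum_congr rfl fun k hk => ?_
  obtain _ | _ | k := k
  · simp
  · simp at hk
  · exact coeff_X_pow_mul_eq_of_trunc_eq (Nat.choose_pos (by omega))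
      (trunc_pow_eq_of_trunc_eq h _)

theorem partialThetaCoeff_eq_zero_iff {m : ℕ} {x : R⟦X⟧} :
    partialThetaCoeff m x = 0 ↔ coeff m x = -partialThetaCoeffRest m x := by
  rw [partialThetaCoeff_eq_coeff_add_rest, eq_neg_iff_add_eq_zero]

def IsPartialThetaRoot (x : R⟦X⟧) : Prop :=
  ∀ m, partialThetaCoeff m x = 0

theorem existsUnique_isPartialThetaRoot :
    ∃! x : R⟦X⟧, constantCoeff x = -1 ∧ IsPartialThetaRoot x := by
  have hroot (x : R⟦X⟧) : (constantCoeff x = -1 ∧ IsPartialThetaRoot x) ↔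
      ∀ m, coeff m x = -partialThetaCoeffRest m x := by
    simp only [IsPartialThetaRoot, partialThetaCoeff_eq_zero_iff, and_iff_right_iff_imp]
    intro h
    simpa [partialThetaCoeffRest_zero] using h 0
  rw [existsUnique_congr hroot]
  exact existsUnique_coeff_eq_apply fun m _ _ h => by rw [partialThetaCoeffRest_congr h]

theorem IsPartialThetaRoot.coeff_zero_to_four {x : ℤ⟦X⟧} (h : IsPartialThetaRoot x) :
    constantCoeff x = -1 ∧ coeff 1 x = -1 ∧ coeff 2 x = -2 ∧ coeff 3 x = -4 ∧ coeff 4 x = -9 := by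
  have e0 := h 0
  have e1 := h 1
  have e2 := h 2
  have e3 := h 3
  have e4 := h 4
  norm_num [partialThetaCoeff, Finset.sum_range_succ, Nat.choose_two_right, coeff_X_pow_mul']
    at e0 e1 e2 e3 e4
  norm_num [pow_succ, coeff_mul, Finset.Nat.sum_antidiagonal_eq_sum_range_succ_mk,
    Finset.sum_range_succ] at e0 e1 e2 e3 e4
  have c0 : constantCoeff x = -1 := by linarith
  simp only [c0] at e1 e2 e3 e4
  have c1 : coeff 1 x = -1 := by linarith
  simp only [c1] at e2 e3 e4
  have c2 : coeff 2 x = -2 := by linarith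
  simp only [c2] at e3 e4
  have c3 : coeff 3 x = -4 := by linarith
  simp only [c3] at e4
  exact ⟨c0, c1, c2, c3, by linarith⟩

end PartialTheta

/-- Over any commutative ring `R` there is a unique formal power series `x₀(y)` with
constant term `-1` such that `f(x₀(y), y) = 0`, where `f(x,y) = ∑_{k≥0} y^{C(k,2)} x^k`
is the partial theta function (the equation `f(x₀(y),y) = 0` is expressed
coefficientwise: the coefficient of `y^m` of `∑_k y^{C(k,2)} x₀(y)^k` vanishes;
only the terms with `k ≤ m+1` can contribute). Moreover, for `R = ℤ`, the first
coefficients of `-x₀(y)` are `1, 1, 2, 4, 9`. -/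
theorem partial_theta_leading_root :
    (∀ (R : Type) [CommRing R], ∃! x₀ : PowerSeries R,
      PowerSeries.constantCoeff (R := R) x₀ = -1 ∧
      ∀ m : ℕ, ∑ k ∈ Finset.range (m + 2),
        (PowerSeries.coeff (R := R) m) ((PowerSeries.X : PowerSeries R) ^ (k.choose 2) * x₀ ^ k) = 0) ∧
    (∀ x₀ : PowerSeries ℤ,
      (PowerSeries.constantCoeff (R := ℤ) x₀ = -1 ∧
        ∀ m : ℕ, ∑ k ∈ Finset.range (m + 2),
          (PowerSeries.coeff (R := ℤ) m) ((PowerSeries.X : PowerSeries ℤ) ^ (k.choose 2) * x₀ ^ k) = 0) →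
      PowerSeries.coeff (R := ℤ) 0 (-x₀) = 1 ∧ PowerSeries.coeff (R := ℤ) 1 (-x₀) = 1 ∧
        PowerSeries.coeff (R := ℤ) 2 (-x₀) = 2 ∧ PowerSeries.coeff (R := ℤ) 3 (-x₀) = 4 ∧
        PowerSeries.coeff (R := ℤ) 4 (-x₀) = 9) := by
  refine ⟨fun R _ => existsUnique_isPartialThetaRoot, fun x₀ ⟨_, hroot⟩ => ?_⟩
  obtain ⟨c0, c1, c2, c3, c4⟩ := IsPartialThetaRoot.coeff_zero_to_four hroot
  simp [c0, c1, c2, c3, c4]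
end

section
/- Define a sequence of integers (L_k)_{k≥0} and auxiliary doubly indexed integers m_{k,i} (k ≥ 0, i ≥ 1) by m_{0,i} = 1 for all i, m_{k,0} = 0, and the recurrence m_{k,i} = m_{k,i-1} + Σ_{j≥i} (-1)^{j-i} m_{k - C(j-i+2,2), j+1}, where m_{t,i} = 0 for t < 0 (the sum is finite). Set L_k = m_{k,1}. Then the power series ξ_0(y) = Σ_{k≥0} L_k y^k satisfies Σ_{n≥0} y^{C(n,2)} (-ξ_0(y))^n = 0, i.e., -ξ_0(y) is the leading root of the partial theta function Σ_{n≥0} y^{C(n,2)} x^n. -/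
/-!
Let `ξ = ∑ₖ m k 1 yᵏ` and `θₙ(x) = ∑_{j<n} y^{C(j,2)} xʲ`. By strong induction on `k`, the `k`-th
coefficient of `ξⁱ` is `m k i` for every `i ≥ 1`; the recurrence only involves lower degrees since
each of its terms carries a factor `y^{C(s+2,2)}` with `C(s+2,2) ≥ 1`. Given the claim below degree
`k`, the recurrence at `i = 1` says exactly that `θ(-ξ)` vanishes up to degree `k`; multiplied by
`ξⁱ`, this becomes the recurrence relating `ξ^{i+1}` to `ξⁱ` in degree `k`, which is the one
satisfied by `m · (i + 1)`.
-/

open Finset PowerSeries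

lemma Nat.succ_le_choose_two_add_two (s : ℕ) : s + 1 ≤ (s + 2).choose 2 := by
  rw [Nat.choose_succ_succ', Nat.choose_one_right]
  omega

noncomputable def partialTheta {R : Type*} [Semiring R] (n : ℕ) (x : R⟦X⟧) : R⟦X⟧ :=
  ∑ j ∈ range n, X ^ j.choose 2 * x ^ j

lemma partialTheta_add_two_neg {R : Type*} [CommRing R] (n : ℕ) (x : R⟦X⟧) :
    partialTheta (n + 2) (-x) =
      1 - x + ∑ s ∈ range n, (-1) ^ s * (X ^ (s + 2).choose 2 * x ^ (s + 2)) := by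
  have hterm : ∀ s, X ^ (s + 1 + 1).choose 2 * (-x) ^ (s + 1 + 1) =
      (-1) ^ s * (X ^ (s + 2).choose 2 * x ^ (s + 2)) := fun s => by ring
  rw [partialTheta, sum_range_succ', sum_range_succ']
  simp only [hterm, zero_add, Nat.choose_zero_succ, Nat.choose_succ_self, pow_zero, pow_one]
  ring

lemma coeff_neg_one_pow_mul {R : Type*} [CommRing R] (k s : ℕ) (f : R⟦X⟧) :
    coeff k ((-1) ^ s * f) = (-1) ^ s * coeff k f := by
  rw [show ((-1 : R⟦X⟧)) ^ s = C ((-1) ^ s) by simp, coeff_C_mul]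

lemma coeff_X_pow_mul_congr {R : Type*} [Semiring R] {f g : R⟦X⟧} {c k : ℕ} (hc : 1 ≤ c)
    (h : ∀ t < k, coeff t f = coeff t g) : coeff k (X ^ c * f) = coeff k (X ^ c * g) := by
  simp only [coeff_X_pow_mul']
  split_ifs
  · exact h _ (by omega)
  · rfl

lemma sum_range_coeff_X_pow_choose_mul {R : Type*} [CommRing R] (f : ℕ → R⟦X⟧) {k n : ℕ}
    (hkn : k ≤ n) :
    ∑ s ∈ range n, (-1) ^ s * coeff k (X ^ (s + 2).choose 2 * f s) =
      ∑ s ∈ range k, (-1) ^ s * coeff k (X ^ (s + 2).choose 2 * f s) := by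
  refine (sum_subset (range_subset_range.2 hkn) fun s _ hs => ?_).symm
  have := Nat.succ_le_choose_two_add_two s
  rw [mem_range] at hs
  rw [coeff_X_pow_mul', if_neg (by omega), mul_zero]

def BraidCountRecurrence (m : ℕ → ℕ → ℤ) : Prop :=
  ∀ k i : ℕ, 1 ≤ k → 1 ≤ i →
    m k i = m k (i - 1) + ∑ j ∈ Finset.Ico i (k + i),
      (-1 : ℤ) ^ (j - i) *
        (if (j - i + 2).choose 2 ≤ k then m (k - (j - i + 2).choose 2) (j + 1) else 0)

noncomputable def columnSeries (m : ℕ → ℕ → ℤ) (i : ℕ) : ℤ⟦X⟧ :=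
  mk fun k => m k i

section

variable {m : ℕ → ℕ → ℤ}

lemma BraidCountRecurrence.coeff_columnSeries (hrec : BraidCountRecurrence m) {k i : ℕ}
    (hk : 1 ≤ k) (hi : 1 ≤ i) :
    m k i = m k (i - 1) +
      ∑ s ∈ range k, (-1) ^ s * coeff k (X ^ (s + 2).choose 2 * columnSeries m (i + s + 1)) := by
  rw [hrec k i hk hi, sum_Ico_eq_sum_range, Nat.add_sub_cancel]
  congr 1
  refine sum_congr rfl fun s _ => ?_
  rw [coeff_X_pow_mul', columnSeries, coeff_mk, Nat.add_sub_cancel_left]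

lemma coeff_X_pow_choose_mul_columnSeries {k : ℕ}
    (hagree : ∀ t < k, ∀ i, 1 ≤ i → m t i = coeff t (columnSeries m 1 ^ i)) (s : ℕ) {j : ℕ}
    (hj : 1 ≤ j) :
    coeff k (X ^ (s + 2).choose 2 * columnSeries m j) =
      coeff k (X ^ (s + 2).choose 2 * columnSeries m 1 ^ j) :=
  coeff_X_pow_mul_congr (by have := Nat.succ_le_choose_two_add_two s; omega) fun t ht => by
    rw [columnSeries, coeff_mk, hagree t ht j hj]

lemma coeff_partialTheta_neg_columnSeries_eq_zero (hbase : ∀ i, 1 ≤ i → m 0 i = 1)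
    (hzero : ∀ k, m k 0 = 0) (hrec : BraidCountRecurrence m) {k n : ℕ} (hkn : k ≤ n)
    (hagree : ∀ t < k, ∀ i, 1 ≤ i → m t i = coeff t (columnSeries m 1 ^ i)) :
    coeff k (partialTheta (n + 2) (-columnSeries m 1)) = 0 := by
  rw [partialTheta_add_two_neg, map_add, map_sub, map_sum]
  simp only [coeff_neg_one_pow_mul]
  rw [sum_range_coeff_X_pow_choose_mul _ hkn]
  rcases Nat.eq_zero_or_pos k with rfl | hk
  · simp [columnSeries, hbase 1 le_rfl]
  · have hrec₁ := hrec.coeff_columnSeries hk le_rfl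
    simp only [Nat.sub_self, hzero, zero_add,
      fun s => coeff_X_pow_choose_mul_columnSeries hagree s (j := 1 + s + 1) (by omega)] at hrec₁
    rw [coeff_one, if_neg hk.ne', columnSeries, coeff_mk, hrec₁]
    simp only [columnSeries, show ∀ s, 1 + s + 1 = s + 2 by omega]
    ring

lemma X_pow_succ_dvd_partialTheta_neg_columnSeries (hbase : ∀ i, 1 ≤ i → m 0 i = 1)
    (hzero : ∀ k, m k 0 = 0) (hrec : BraidCountRecurrence m) {k : ℕ}
    (hagree : ∀ t < k, ∀ i, 1 ≤ i → m t i = coeff t (columnSeries m 1 ^ i)) :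
    X ^ (k + 1) ∣ partialTheta (k + 2) (-columnSeries m 1) :=
  X_pow_dvd_iff.2 fun t ht =>
    coeff_partialTheta_neg_columnSeries_eq_zero hbase hzero hrec (by omega)
      fun t' ht' => hagree t' (by omega)

lemma coeff_columnSeries_pow (hbase : ∀ i, 1 ≤ i → m 0 i = 1) (hzero : ∀ k, m k 0 = 0)
    (hrec : BraidCountRecurrence m) (k : ℕ) :
    ∀ i, 1 ≤ i → m k i = coeff k (columnSeries m 1 ^ i) := by
  induction k using Nat.strong_induction_on with
  | _ k IH =>
  rcases Nat.eq_zero_or_pos k with rfl | hk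
  · intro i hi
    rw [coeff_zero_eq_constantCoeff_apply, map_pow, ← coeff_zero_eq_constantCoeff_apply,
      columnSeries, coeff_mk, hbase i hi, hbase 1 le_rfl, one_pow]
  intro i hi
  induction i, hi using Nat.le_induction with
  | base => rw [pow_one, columnSeries, coeff_mk]
  | succ i _ IHi =>
    set ξ := columnSeries m 1
    have htheta : coeff k (ξ ^ i * partialTheta (k + 2) (-ξ)) = 0 :=
      X_pow_dvd_iff.1 (dvd_mul_of_dvd_right
        (X_pow_succ_dvd_partialTheta_neg_columnSeries hbase hzero hrec IH) _) k k.lt_succ_self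
    have hmul : ∀ s, ξ ^ i * ((-1) ^ s * (X ^ (s + 2).choose 2 * ξ ^ (s + 2))) =
        (-1) ^ s * (X ^ (s + 2).choose 2 * ξ ^ (i + 1 + s + 1)) := fun s => by ring
    rw [partialTheta_add_two_neg, mul_add, mul_sub, mul_one, mul_sum, ← pow_succ, map_add,
      map_sub, map_sum] at htheta
    simp only [hmul, coeff_neg_one_pow_mul] at htheta
    rw [hrec.coeff_columnSeries hk (by omega), Nat.add_sub_cancel, IHi]
    simp only [fun s => coeff_X_pow_choose_mul_columnSeries IH s (j := i + 1 + s + 1) (by omega)]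
    linarith

end

/-- Let `m k i` be the stabilized counts defined by `m 0 i = 1` for `i ≥ 1`,
`m k 0 = 0`, and for `k, i ≥ 1` the recurrence
`m k i = m k (i-1) + ∑_{j ≥ i} (-1)^{j-i} m (k - C(j-i+2,2)) (j+1)`
(only the terms with `C(j-i+2,2) ≤ k` contribute, so the sum is finite and terms with
`t < 0` are zero). Set `L_k = m k 1` and `ξ₀(y) = ∑_k L_k y^k`. Then
`∑_{n≥0} y^{C(n,2)} (-ξ₀(y))^n = 0`, i.e. `-ξ₀` is the leading root of the partial
theta function (the equation is stated coefficientwise; only terms with `n ≤ N+1`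
can contribute to the coefficient of `y^N`). -/
theorem leading_root_coefficients_count_braids
    (m : ℕ → ℕ → ℤ)
    (hbase : ∀ i : ℕ, 1 ≤ i → m 0 i = 1)
    (hzero : ∀ k : ℕ, m k 0 = 0)
    (hrec : ∀ k i : ℕ, 1 ≤ k → 1 ≤ i →
      m k i = m k (i - 1) + ∑ j ∈ Finset.Ico i (k + i),
        (-1 : ℤ) ^ (j - i) *
          (if (j - i + 2).choose 2 ≤ k then m (k - (j - i + 2).choose 2) (j + 1) else 0)) :
    ∀ N : ℕ, ∑ n ∈ Finset.range (N + 2),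
      (PowerSeries.coeff (R := ℤ) N)
        ((PowerSeries.X : PowerSeries ℤ) ^ (n.choose 2) *
          (-(PowerSeries.mk fun k => m k 1)) ^ n) = 0 := by
  intro N
  rw [← map_sum]
  exact coeff_partialTheta_neg_columnSeries_eq_zero hbase hzero hrec le_rfl fun t _ =>
    coeff_columnSeries_pow hbase hzero hrec t
end

section
/- With the stabilized numbers m_{k,i} defined by the recurrence m_{k,i} = m_{k,i-1} + Σ_{j≥i} (-1)^{j-i} m_{k - C(j-i+2,2), j+1} (m_{0,i} = 1, m_{k,0} = 0, m_{t,i} = 0 for t < 0), and ξ_0(y) = Σ_{k≥0} m_{k,1} y^k, for every t ≥ 1 the t-th power of ξ_0 satisfies ξ_0(y)^t = Σ_{k≥0} m_{k,t} y^k. -/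
/-!
Write `F = ξ₀` and `H i = ∑ₖ m k i • yᵏ`; we show `F ^ t ≡ H t mod y ^ k` for all `t ≥ 1`
by induction on `k`. The recurrence at `i = 1` says `F - 1 ≡ ∑_d (-1)^d y^{C(d+2,2)} H (d+2)`,
and since `C(d+2,2) ≥ 1` the induction hypothesis may replace each `H` there by the power
of `F`, one degree higher. Hence in degree `k`
  `F^(s+1) - F^s = (F - 1) F^s ≡ ∑_d (-1)^d y^{C(d+2,2)} F^(d+s+2)`
  `              ≡ ∑_d (-1)^d y^{C(d+2,2)} H (d+s+2)`,
which by the recurrence is `H (s+1) - H s`; telescoping from `s = 0` closes the induction.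
-/

open Finset PowerSeries

namespace XiPowers

variable {R : Type*} [CommRing R]

theorem succ_le_choose_two (d : ℕ) : d + 1 ≤ (d + 2).choose 2 := by
  rw [Nat.choose_succ_succ', Nat.choose_one_right]
  exact Nat.le_add_right _ _

def StabilizedRec (m : ℕ → ℕ → R) : Prop :=
  ∀ k i : ℕ, 1 ≤ k → 1 ≤ i →
    m k i = m k (i - 1) + ∑ j ∈ Finset.Ico i (k + i),
      (-1 : R) ^ (j - i) *
        (if (j - i + 2).choose 2 ≤ k then m (k - (j - i + 2).choose 2) (j + 1) else 0)

def columnSeries (m : ℕ → ℕ → R) (i : ℕ) : R⟦X⟧ :=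
  mk fun k => m k i

noncomputable def triAltSum (G : ℕ → R⟦X⟧) (N j : ℕ) : R⟦X⟧ :=
  ∑ d ∈ range N, (-1 : R) ^ d • (X ^ (d + 2).choose 2 * G (d + j))

theorem coeff_triAltSum (G : ℕ → R⟦X⟧) (N j k : ℕ) :
    coeff k (triAltSum G N j) = ∑ d ∈ range N, (-1) ^ d *
      if (d + 2).choose 2 ≤ k then coeff (k - (d + 2).choose 2) (G (d + j)) else 0 := by
  simp only [triAltSum, map_sum, coeff_smul, coeff_X_pow_mul', smul_eq_mul]

theorem coeff_triAltSum_of_le (G : ℕ → R⟦X⟧) {N j k : ℕ} (hkN : k ≤ N) :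
    coeff k (triAltSum G N j) = coeff k (triAltSum G k j) := by
  rw [coeff_triAltSum, coeff_triAltSum]
  refine (sum_subset (range_subset_range.2 hkN) fun d _ hd => ?_).symm
  have : k < (d + 2).choose 2 := by
    have := succ_le_choose_two d
    simp only [mem_range, not_lt] at hd
    omega
  rw [if_neg this.not_ge, mul_zero]

theorem triAltSum_pow_mul (F : R⟦X⟧) (N j s : ℕ) :
    triAltSum (F ^ ·) N j * F ^ s = triAltSum (F ^ ·) N (j + s) := by
  simp only [triAltSum, sum_mul, smul_mul_assoc, mul_assoc, ← pow_add, add_assoc]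

theorem X_pow_succ_dvd_triAltSum_sub {G G' : ℕ → R⟦X⟧} {k j : ℕ}
    (h : ∀ t, j ≤ t → X ^ k ∣ G t - G' t) (N : ℕ) :
    X ^ (k + 1) ∣ triAltSum G N j - triAltSum G' N j := by
  rw [triAltSum, triAltSum, ← sum_sub_distrib]
  refine dvd_sum fun d _ => ?_
  rw [← smul_sub, ← mul_sub, pow_succ']
  refine dvd_smul_of_dvd _ ?_
  exact mul_dvd_mul (dvd_pow_self X (by have := succ_le_choose_two d; omega))
    (h _ (Nat.le_add_left j d))

variable {m : ℕ → ℕ → R}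

theorem StabilizedRec.eq_add_coeff_triAltSum (hrec : StabilizedRec m) {k i N : ℕ}
    (hk : 1 ≤ k) (hi : 1 ≤ i) (hkN : k ≤ N) :
    m k i = m k (i - 1) + coeff k (triAltSum (columnSeries m) N (i + 1)) := by
  rw [coeff_triAltSum_of_le _ hkN, coeff_triAltSum, hrec k i hk hi, sum_Ico_eq_sum_range,
    Nat.add_sub_cancel]
  congr 1
  refine sum_congr rfl fun d _ => ?_
  rw [Nat.add_sub_cancel_left, columnSeries, coeff_mk, Nat.add_comm i d, Nat.add_assoc]

theorem X_pow_succ_dvd_columnSeries_one_sub (hrec : StabilizedRec m) (h01 : m 0 1 = 1)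
    (hzero : ∀ k, m k 0 = 0) (k : ℕ) :
    X ^ (k + 1) ∣ columnSeries m 1 - 1 - triAltSum (columnSeries m) k 2 := by
  refine X_pow_dvd_iff.2 fun a ha => ?_
  rw [map_sub, map_sub, sub_sub, sub_eq_zero]
  rcases Nat.eq_zero_or_pos a with rfl | ha0
  · have hc : ∀ d : ℕ, ¬(d + 2).choose 2 ≤ 0 := fun d => by
      have := succ_le_choose_two d; omega
    simp [columnSeries, h01, coeff_triAltSum, hc]
  · rw [columnSeries, coeff_mk, hrec.eq_add_coeff_triAltSum (N := k) ha0 le_rfl (by omega),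
      coeff_one, if_neg ha0.ne', hzero, zero_add]

theorem coeff_columnSeries_one_pow (hrec : StabilizedRec m) (h01 : m 0 1 = 1)
    (hzero : ∀ k, m k 0 = 0) {k : ℕ} (hk : 1 ≤ k)
    (hlow : ∀ t, 1 ≤ t → X ^ k ∣ columnSeries m 1 ^ t - columnSeries m t) (s : ℕ) :
    coeff k (columnSeries m 1 ^ s) = m k s := by
  set F := columnSeries m 1
  set H := columnSeries m
  have hstep : ∀ s, X ^ (k + 1) ∣ F ^ (s + 1) - F ^ s - triAltSum H k (s + 2) := fun s => by
    have hsplit : F ^ (s + 1) - F ^ s - triAltSum H k (s + 2) =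
        (F - 1 - triAltSum H k 2) * F ^ s +
          (triAltSum H k 2 - triAltSum (F ^ ·) k 2) * F ^ s +
          (triAltSum (F ^ ·) k (s + 2) - triAltSum H k (s + 2)) := by
      have hshift := triAltSum_pow_mul F k 2 s
      rw [add_comm 2 s] at hshift
      linear_combination hshift
    rw [hsplit]
    refine dvd_add (dvd_add ?_ ?_) ?_
    · exact (X_pow_succ_dvd_columnSeries_one_sub hrec h01 hzero k).mul_right _
    · refine (X_pow_succ_dvd_triAltSum_sub (fun t ht => ?_) k).mul_right _
      exact dvd_sub_comm.1 (hlow t (by omega))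
    · exact X_pow_succ_dvd_triAltSum_sub (fun t ht => hlow t (by omega)) k
  induction s with
  | zero => rw [pow_zero, coeff_one, if_neg (by omega), hzero]
  | succ s ih =>
    have hcoeff := X_pow_dvd_iff.1 (hstep s) k (Nat.lt_succ_self k)
    rw [map_sub, map_sub, ih, sub_sub, sub_eq_zero] at hcoeff
    rw [hcoeff, hrec.eq_add_coeff_triAltSum (i := s + 1) hk s.succ_pos le_rfl]
    rfl

theorem X_pow_dvd_columnSeries_one_pow_sub (hrec : StabilizedRec m)
    (hbase : ∀ i, 1 ≤ i → m 0 i = 1) (hzero : ∀ k, m k 0 = 0) (k : ℕ) :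
    ∀ t, 1 ≤ t → X ^ k ∣ columnSeries m 1 ^ t - columnSeries m t := by
  induction k with
  | zero => simp
  | succ k ih =>
    intro t ht
    refine X_pow_dvd_iff.2 fun a ha => ?_
    rcases Nat.lt_succ_iff_lt_or_eq.1 ha with ha | rfl
    · exact X_pow_dvd_iff.1 (ih t ht) a ha
    rw [map_sub, sub_eq_zero]
    rcases Nat.eq_zero_or_pos a with rfl | ha0
    · simp [coeff_zero_eq_constantCoeff, columnSeries, hbase 1 le_rfl, hbase t ht]
    · rw [coeff_columnSeries_one_pow hrec (hbase 1 le_rfl) hzero ha0 ih, columnSeries, coeff_mk]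

end XiPowers

/-- With the stabilized numbers `m k i` defined by the recurrence
`m k i = m k (i-1) + ∑_{j ≥ i} (-1)^{j-i} m (k - C(j-i+2,2)) (j+1)`
(`m 0 i = 1` for `i ≥ 1`, `m k 0 = 0`, terms with negative first index are zero), and
`ξ₀(y) = ∑_k (m k 1) y^k`, for every `t ≥ 1` one has `ξ₀(y)^t = ∑_k (m k t) y^k`. -/
theorem xi_powers
    (m : ℕ → ℕ → ℤ)
    (hbase : ∀ i : ℕ, 1 ≤ i → m 0 i = 1)
    (hzero : ∀ k : ℕ, m k 0 = 0)
    (hrec : ∀ k i : ℕ, 1 ≤ k → 1 ≤ i →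
      m k i = m k (i - 1) + ∑ j ∈ Finset.Ico i (k + i),
        (-1 : ℤ) ^ (j - i) *
          (if (j - i + 2).choose 2 ≤ k then m (k - (j - i + 2).choose 2) (j + 1) else 0)) :
    ∀ t : ℕ, 1 ≤ t →
      (PowerSeries.mk fun k => m k 1) ^ t = PowerSeries.mk fun k => m k t := by
  intro t ht
  ext k
  have hdvd := XiPowers.X_pow_dvd_columnSeries_one_pow_sub hrec hbase hzero (k + 1) t ht
  rw [X_pow_dvd_iff] at hdvd
  simpa [XiPowers.columnSeries, sub_eq_zero] using hdvd k (Nat.lt_succ_self k)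
end

section
/- In the positive braid monoid A_∞ on infinitely many strands (generators a_1, a_2, ... with braid relations a_i a_j = a_j a_i for |i-j| > 1 and a_i a_j a_i = a_j a_i a_j for |i-j| = 1), any element of length k whose lexicographically maximal word representative (with a_1 < a_2 < ...) starts with a letter from {a_1,...,a_i} can only be represented by words using letters from {a_1, ..., a_{k+i-1}}. -/
/-- One elementary application of a braid relation to a word (a list of generator
indices): either swap two adjacent letters `a b` with `|a - b| > 1`, or replace a
subword `a b a` by `b a b` with `|a - b| = 1`. -/
def BraidStep : List ℕ → List ℕ → Prop := fun w w' =>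
  ∃ u v : List ℕ, ∃ a b : ℕ,
    (((a + 1 < b ∨ b + 1 < a) ∧ w = u ++ [a, b] ++ v ∧ w' = u ++ [b, a] ++ v) ∨
      ((b = a + 1 ∨ a = b + 1) ∧ w = u ++ [a, b, a] ++ v ∧ w' = u ++ [b, a, b] ++ v))

/-- Two words represent the same element of the braid monoid `A_∞` iff they are related
by the equivalence closure of `BraidStep`. -/
def BraidEquiv : List ℕ → List ℕ → Prop := Relation.EqvGen BraidStep

lemma braidStep_invariant {w w' : List ℕ} (h : BraidStep w w') :
    w.length = w'.length ∧ ∀ x, x ∈ w ↔ x ∈ w' := by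
  obtain ⟨u, v, a, b, h | h⟩ := h
  · obtain ⟨_, rfl, rfl⟩ := h
    constructor
    · simp
    · intro x; simp [List.mem_append]; tauto
  · obtain ⟨_, rfl, rfl⟩ := h
    constructor
    · simp
    · intro x; simp [List.mem_append]; tauto

lemma braidEquiv_invariant {w w' : List ℕ} (h : BraidEquiv w w') :
    w.length = w'.length ∧ ∀ x, x ∈ w ↔ x ∈ w' := by
  induction h with
  | rel _ _ h => exact braidStep_invariant h
  | refl => exact ⟨rfl, fun _ => Iff.rfl⟩
  | symm _ _ _ ih => exact ⟨ih.1.symm, fun x => (ih.2 x).symm⟩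
  | trans _ _ _ _ _ ih1 ih2 => exact ⟨ih1.1.trans ih2.1, fun x => (ih1.2 x).trans (ih2.2 x)⟩

lemma lex_append_left (r : ℕ → ℕ → Prop) (u : List ℕ) {l₁ l₂ : List ℕ}
    (h : List.Lex r l₁ l₂) : List.Lex r (u ++ l₁) (u ++ l₂) := by
  induction u with
  | nil => exact h
  | cons a u ih => exact List.Lex.cons ih

lemma maximal_adjacent (w : List ℕ)
    (hmax : ∀ w' : List ℕ, BraidEquiv w w' → w' = w ∨ List.Lex (· < ·) w' w) :
    ∀ u x y v, w = u ++ x :: y :: v → y ≤ x + 1 := by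
  intro u x y v hw
  by_contra hxy
  push_neg at hxy
  have hstep : BraidStep w (u ++ y :: x :: v) := by
    refine ⟨u, v, x, y, Or.inl ⟨Or.inl hxy, ?_, ?_⟩⟩ <;> simp [hw]
  have h := hmax _ (Relation.EqvGen.rel _ _ hstep)
  have hlt : List.Lex (· < ·) w (u ++ y :: x :: v) := by
    rw [hw]
    exact lex_append_left _ u (List.Lex.rel (by omega))
  rcases h with h | h
  · rw [hw] at h
    have := List.append_cancel_left h
    simp at this
    omega
  · exact asymm h hlt

lemma bound_of_adjacent : ∀ (w : List ℕ) (i : ℕ),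
    (∀ u x y v, w = u ++ x :: y :: v → y ≤ x + 1) →
    (∀ h ∈ w.head?, h ≤ i) → ∀ x ∈ w, x ≤ i + w.length - 1 := by
  intro w
  induction w with
  | nil => intro i _ _ x hx; simp at hx
  | cons a t ih =>
    intro i hadj hhead x hx
    have ha : a ≤ i := hhead a rfl
    rcases List.mem_cons.mp hx with rfl | hx
    · simp; omega
    · have hadj' : ∀ u x y v, t = u ++ x :: y :: v → y ≤ x + 1 := by
        intro u x y v ht
        exact hadj (a :: u) x y v (by simp [ht])
      have hhead' : ∀ h ∈ t.head?, h ≤ i + 1 := by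
        intro h hh
        cases t with
        | nil => simp at hh
        | cons b t' =>
          simp at hh
          have := hadj [] a b t' rfl
          omega
      have := ih (i + 1) hadj' hhead' x hx
      simp
      omega

/-- In the positive braid monoid `A_∞` (generators `a_1, a_2, …`, letters being their
indices), if an element of length `k` has lexicographically maximal representative `w`
starting with a letter from `{a_1, …, a_i}`, then every word representing that element
uses only letters from `{a_1, …, a_{k+i-1}}`. -/
theorem braid_infinite_letters_bounded
    (k i : ℕ) (hi : 1 ≤ i) (w : List ℕ)
    (hpos : ∀ x ∈ w, 1 ≤ x)
    (hlen : w.length = k)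
    (hmax : ∀ w' : List ℕ, BraidEquiv w w' → w' = w ∨ List.Lex (· < ·) w' w)
    (hhead : ∀ h ∈ w.head?, h ≤ i) :
    ∀ w' : List ℕ, BraidEquiv w w' → ∀ x ∈ w', x ≤ k + i - 1 := by
  intro w' hww' x hx
  have hmem : x ∈ w := ((braidEquiv_invariant hww').2 x).mpr hx
  have := bound_of_adjacent w i (maximal_adjacent w hmax) hhead x hmem
  omega
end
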